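/- Under an exponential dichotomy, any bounded continuous solution x of the integral equation with inhomogeneity y ∈ L^q satisfies Q(τ)x(τ) = −∫_τ^{∞} T(τ,t)_| Q(t)y(t) dt for every τ ∈ ℝ. -/

import Mathlib

open MeasureTheory Set Filter
open scoped ENNReal

/-- The `L^p`-norm of a function `f : ℝ → X` with respect to a family of norms
`N t = ‖·‖_t` on `X` (ess sup when `p = ∞`). -/
noncomputable def famLpNorm {X : Type*} [NormedAddCommGroup X]
    (N : ℝ → X → ℝ) (p : ℝ≥0∞) (f : ℝ → X) : ℝ≥0∞ :=
  if p = ∞ then essSup (fun t => ENNReal.ofReal (N t (f t))) volume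
  else (∫⁻ t, ENNReal.ofReal (N t (f t)) ^ p.toReal) ^ (1 / p.toReal)

/-- Membership in `Y₁ = L^p ∩ C_b` with respect to the family of norms `N`. -/
def MemY1 {X : Type*} [NormedAddCommGroup X]
    (N : ℝ → X → ℝ) (p : ℝ≥0∞) (x : ℝ → X) : Prop :=
  Continuous x ∧ (∃ M, ∀ t, N t (x t) ≤ M) ∧ famLpNorm N p x < ∞

/-- Membership in `Y₂ = L^q` with respect to the family of norms `N`. -/
def MemY2 {X : Type*} [NormedAddCommGroup X]
    (N : ℝ → X → ℝ) (q : ℝ≥0∞) (y : ℝ → X) : Prop :=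
  AEStronglyMeasurable y volume ∧ famLpNorm N q y < ∞

/-- `x` solves the inhomogeneous integral equation
`x t = T t τ (x τ) + ∫_τ^t T t s (y s) ds` associated with the evolutionary family `T`. -/
def SolvesEq {X : Type*} [NormedAddCommGroup X] [NormedSpace ℝ X]
    (T : ℝ → ℝ → X →L[ℝ] X) (x y : ℝ → X) : Prop :=
  ∀ τ t, τ ≤ t → x t = T t τ (x τ) + ∫ s in Ioc τ t, T t s (y s)

/-- Exponential dichotomy of the evolutionary family `T` with respect to the family of
norms `N`, with projections `P t`, inverse maps `S τ t` (the inverses of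
`T t τ : Ker P τ → Ker P t`, applied after `Q t = I - P t`), and constants `a < 0 < b`,
`D > 0`. -/
def IsDichotomy {X : Type*} [NormedAddCommGroup X] [NormedSpace ℝ X]
    (T : ℝ → ℝ → X →L[ℝ] X) (N : ℝ → X → ℝ)
    (P : ℝ → X →L[ℝ] X) (S : ℝ → ℝ → X →L[ℝ] X) (a b D : ℝ) : Prop :=
  a < 0 ∧ 0 < b ∧ 0 < D ∧
  (∀ t, (P t).comp (P t) = P t) ∧
  (∀ τ t, τ ≤ t → (P t).comp (T t τ) = (T t τ).comp (P τ)) ∧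
  (∀ τ t, τ ≤ t → ∀ u, T t τ (S τ t (u - P t u)) = u - P t u) ∧
  (∀ τ t, τ ≤ t → ∀ u, S τ t (T t τ u - P t (T t τ u)) = u - P τ u) ∧
  (∀ τ t, τ ≤ t → ∀ u, P τ (S τ t (u - P t u)) = 0) ∧
  (∀ τ t u, τ ≤ t → N t (T t τ (P τ u)) ≤ D * Real.exp (a * (t - τ)) * N τ u) ∧
  (∀ τ t u, τ ≤ t → N τ (S τ t (u - P t u)) ≤ D * Real.exp (-b * (t - τ)) * N t u)

open scoped Topology

/-!
Write `Q t = 1 - P t`. Applying `S τ t ∘ Q t` to the integral equation and using the cocycle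
property, `S(τ,t) Q(t) x(t) = Q(τ) x(τ) + ∫_τ^t S(τ,s) Q(s) y(s) ds`. As `t → ∞` the left side is
`O(e^{-b(t-τ)})` because `x` is bounded, while the integrand is dominated by
`D e^{-b(s-τ)} ‖y(s)‖_s`, integrable on `(τ, ∞)` by Hölder since `‖y(·)‖_· ∈ L^q`.
-/

theorem LipschitzWith.of_subadditive_of_le_mul_norm {E : Type*} [SeminormedAddCommGroup E]
    {n : E → ℝ} {L : NNReal} (hadd : ∀ u v, n (u + v) ≤ n u + n v)
    (hle : ∀ u, n u ≤ L * ‖u‖) : LipschitzWith L n :=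
  LipschitzWith.of_le_add_mul L fun u v => by
    simpa [dist_eq_norm] using (hadd v (u - v)).trans (by linarith [hle (u - v)])

/-- Approximating `f` by simple functions reduces this to finitely many values of the second
argument of `Φ`. -/
theorem aestronglyMeasurable_of_continuous_of_aestronglyMeasurable {α X E : Type*}
    [MeasurableSpace α] {μ : Measure α} [TopologicalSpace X] [NormedAddCommGroup E]
    {Φ : α → X → E} (hcont : ∀ s, Continuous (Φ s))
    (hmeas : ∀ u, AEStronglyMeasurable (fun s => Φ s u) μ) {f : α → X}
    (hf : AEStronglyMeasurable f μ) : AEStronglyMeasurable (fun s => Φ s (f s)) μ := by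
  classical
  obtain ⟨g, hg, hfg⟩ := hf
  have hsimple (φ : SimpleFunc α X) : AEStronglyMeasurable (fun s => Φ s (φ s)) μ := by
    have hsum : (fun s => Φ s (φ s))
        = fun s => ∑ u ∈ φ.range, (φ ⁻¹' {u}).indicator (fun s => Φ s u) s := by
      funext s
      rw [Finset.sum_eq_single (φ s)]
      · exact (indicator_of_mem (show s ∈ φ ⁻¹' {φ s} from rfl) (fun s => Φ s (φ s))).symm
      · exact fun u _ hu => indicator_of_notMem (show s ∉ φ ⁻¹' {u} from fun h => hu h.symm) _
      · exact fun h => absurd (φ.mem_range_self s) h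
    rw [hsum]
    exact Finset.aestronglyMeasurable_fun_sum _
      fun u _ => (hmeas u).indicator (φ.measurableSet_fiber u)
  refine (aestronglyMeasurable_of_tendsto_ae atTop (fun n => hsimple (hg.approx n))
    (ae_of_all _ fun s => ((hcont s).tendsto _).comp (hg.tendsto_approx s))).congr ?_
  filter_upwards [hfg] with s hs
  rw [hs]

section FamilyOfNorms

variable {X : Type*} [NormedAddCommGroup X] {N : ℝ → X → ℝ}

theorem famLpNorm_eq_eLpNorm (hN0 : ∀ t u, 0 ≤ N t u) {p : ℝ≥0∞} (hp : p ≠ 0) (f : ℝ → X) :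
    famLpNorm N p f = eLpNorm (fun t => N t (f t)) p volume := by
  unfold famLpNorm
  split_ifs with hpt
  · simp only [hpt, eLpNorm_exponent_top, eLpNormEssSup, Real.enorm_eq_ofReal (hN0 _ _)]
  · simp only [eLpNorm_eq_lintegral_rpow_enorm_toReal hp hpt, Real.enorm_eq_ofReal (hN0 _ _)]

theorem MemY2.memLp_famNorm (hN0 : ∀ t u, 0 ≤ N t u) (hNcont : ∀ t, Continuous (N t))
    (hNmeas : ∀ u, Measurable fun t => N t u) {q : ℝ≥0∞} (hq : q ≠ 0) {y : ℝ → X}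
    (hy : MemY2 N q y) : MemLp (fun t => N t (y t)) q volume :=
  ⟨aestronglyMeasurable_of_continuous_of_aestronglyMeasurable hNcont
      (fun u => (hNmeas u).aestronglyMeasurable) hy.1,
    famLpNorm_eq_eLpNorm hN0 hq y ▸ hy.2⟩

end FamilyOfNorms

theorem memLp_exp_neg_mul_sub_Ioi {b : ℝ} (hb : 0 < b) (τ : ℝ) (p : ℝ≥0∞) :
    MemLp (fun s => Real.exp (-b * (s - τ))) p (volume.restrict (Ioi τ)) := by
  have hmeas : AEStronglyMeasurable (fun s => Real.exp (-b * (s - τ))) (volume.restrict (Ioi τ)) :=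
    (by fun_prop : Continuous fun s => Real.exp (-b * (s - τ))).aestronglyMeasurable
  rcases eq_or_ne p 0 with rfl | hp0
  · exact memLp_zero_iff_aestronglyMeasurable.2 hmeas
  rcases eq_or_ne p ∞ with rfl | hptop
  · refine memLp_top_of_bound hmeas 1 ((ae_restrict_iff' measurableSet_Ioi).2 (ae_of_all _ ?_))
    intro s (hs : τ < s)
    rw [Real.norm_of_nonneg (Real.exp_pos _).le, Real.exp_le_one_iff]
    nlinarith
  refine (integrable_norm_rpow_iff hmeas hp0 hptop).1 ?_
  have hr : 0 < b * p.toReal := mul_pos hb (ENNReal.toReal_pos hp0 hptop)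
  have hpow (s : ℝ) : ‖Real.exp (-b * (s - τ))‖ ^ p.toReal
      = Real.exp (b * p.toReal * τ) * Real.exp (-(b * p.toReal) * s) := by
    rw [Real.norm_of_nonneg (Real.exp_pos _).le, ← Real.exp_mul, ← Real.exp_add]
    ring_nf
  simp only [hpow]
  exact (exp_neg_integrableOn_Ioi τ hr).const_mul _

namespace IsDichotomy

variable {X : Type*} [NormedAddCommGroup X] [NormedSpace ℝ X] {T : ℝ → ℝ → X →L[ℝ] X}
  {N : ℝ → X → ℝ} {P : ℝ → X →L[ℝ] X} {S : ℝ → ℝ → X →L[ℝ] X} {a b D : ℝ}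

theorem proj_proj (hd : IsDichotomy T N P S a b D) (t : ℝ) (u : X) : P t (P t u) = P t u :=
  DFunLike.congr_fun (hd.2.2.2.1 t) u

theorem proj_evol (hd : IsDichotomy T N P S a b D) {τ t : ℝ} (ht : τ ≤ t) (u : X) :
    P t (T t τ u) = T t τ (P τ u) :=
  DFunLike.congr_fun (hd.2.2.2.2.1 τ t ht) u

theorem inv_unstable_evol_self (hd : IsDichotomy T N P S a b D) {τ t : ℝ} (ht : τ ≤ t) (u : X) :
    S τ t (T t τ u - P t (T t τ u)) = u - P τ u :=
  hd.2.2.2.2.2.2.1 τ t ht u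

/-- Since `T(t,s) ∘ T(s,τ) = T(t,τ)`, inverting `T(t,s)` and then `T(s,τ)` on the unstable
parts inverts `T(t,τ)`. -/
theorem inv_unstable_evol (hd : IsDichotomy T N P S a b D)
    (hCoc : ∀ τ s t, τ ≤ s → s ≤ t → ∀ u, T t s (T s τ u) = T t τ u)
    {τ s t : ℝ} (hτs : τ ≤ s) (hst : s ≤ t) (v : X) :
    S τ t (T t s v - P t (T t s v)) = S τ s (v - P s v) := by
  have hproj_evol := hd.proj_evol hst
  have hproj_proj := hd.proj_proj t
  have hinv_left := hd.inv_unstable_evol_self (hτs.trans hst)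
  obtain ⟨-, -, -, -, -, hinv_right, -, hinv_unstable, -, -⟩ := hd
  set w := S τ s (v - P s v)
  have hTw : T t τ w = T t s v - P t (T t s v) := by
    rw [← hCoc τ s t hτs hst, hinv_right τ s hτs v, map_sub, hproj_evol]
  have hPTw : P t (T t τ w) = 0 := by
    rw [hTw, map_sub, hproj_proj, sub_self]
  calc S τ t (T t s v - P t (T t s v)) = S τ t (T t τ w - P t (T t τ w)) := by
        rw [hPTw, sub_zero, hTw]
    _ = w - P τ w := hinv_left w
    _ = w := by rw [hinv_unstable τ s hτs v, sub_zero]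

theorem inv_unstable_eq_add_integral [CompleteSpace X] (hd : IsDichotomy T N P S a b D)
    (hCoc : ∀ τ s t, τ ≤ s → s ≤ t → ∀ u, T t s (T s τ u) = T t τ u)
    {x y : ℝ → X} (hsol : SolvesEq T x y) {τ t : ℝ} (ht : τ ≤ t)
    (hint : IntegrableOn (fun s => T t s (y s)) (Ioc τ t)) :
    S τ t (x t - P t (x t))
      = (x τ - P τ (x τ)) + ∫ s in Ioc τ t, S τ s (y s - P s (y s)) := by
  set L : X →L[ℝ] X := (S τ t).comp (ContinuousLinearMap.id ℝ X - P t)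
  have hL (u : X) : L u = S τ t (u - P t u) := rfl
  calc S τ t (x t - P t (x t))
      = L (T t τ (x τ)) + L (∫ s in Ioc τ t, T t s (y s)) := by
        rw [← hL, hsol τ t ht, map_add]
    _ = (x τ - P τ (x τ)) + ∫ s in Ioc τ t, S τ s (y s - P s (y s)) := by
        rw [hL, hd.inv_unstable_evol_self ht, ← L.integral_comp_comm hint]
        congr 1
        refine setIntegral_congr_fun measurableSet_Ioc fun s hs => ?_
        exact hd.inv_unstable_evol hCoc hs.1.le hs.2 (y s)

theorem tendsto_inv_unstable_atTop (hd : IsDichotomy T N P S a b D)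
    (hN₁ : ∀ t u, ‖u‖ ≤ N t u) {x : ℝ → X} {M : ℝ} (hM : ∀ t, N t (x t) ≤ M) (τ : ℝ) :
    Tendsto (fun t => S τ t (x t - P t (x t))) atTop (𝓝 0) := by
  obtain ⟨-, hb, hD, -, -, -, -, -, -, hdecay⟩ := hd
  have hexp : Tendsto (fun t => D * M * Real.exp (-b * (t - τ))) atTop (𝓝 0) := by
    have hlin : Tendsto (fun t => -b * (t - τ)) atTop atBot :=
      (tendsto_atTop_add_const_right _ (-τ) tendsto_id).const_mul_atTop_of_neg (neg_neg_of_pos hb)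
    simpa using (Real.tendsto_exp_atBot.comp hlin).const_mul (D * M)
  refine squeeze_zero_norm' ?_ hexp
  filter_upwards [eventually_ge_atTop τ] with t ht
  calc ‖S τ t (x t - P t (x t))‖ ≤ N τ (S τ t (x t - P t (x t))) := hN₁ _ _
    _ ≤ D * Real.exp (-b * (t - τ)) * N t (x t) := hdecay τ t (x t) ht
    _ ≤ D * Real.exp (-b * (t - τ)) * M := by gcongr; exact hM t
    _ = D * M * Real.exp (-b * (t - τ)) := by ring

/-- Hölder's inequality against `e^{-b(t-τ)} ∈ L^{q'}` on `(τ, ∞)`. -/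
theorem integrableOn_inv_unstable_Ioi (hd : IsDichotomy T N P S a b D)
    (hN₁ : ∀ t u, ‖u‖ ≤ N t u) {q : ℝ≥0∞} (hq : 1 ≤ q) {y : ℝ → X}
    (hy : MemLp (fun t => N t (y t)) q volume) (τ : ℝ)
    (hmeas : AEStronglyMeasurable (fun t => S τ t (y t - P t (y t))) volume) :
    IntegrableOn (fun t => S τ t (y t - P t (y t))) (Ioi τ) := by
  obtain ⟨-, hb, -, -, -, -, -, -, -, hdecay⟩ := hd
  have := ENNReal.HolderConjugate.conjExponent hq
  have hprod : IntegrableOn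
      ((fun t => Real.exp (-b * (t - τ))) * fun t => N t (y t)) (Ioi τ) :=
    (memLp_exp_neg_mul_sub_Ioi hb τ q.conjExponent).integrable_mul (hy.restrict _)
  refine (hprod.const_mul D).mono' hmeas.restrict
    ((ae_restrict_iff' measurableSet_Ioi).2 (ae_of_all _ fun t (ht : τ < t) => ?_))
  calc ‖S τ t (y t - P t (y t))‖ ≤ N τ (S τ t (y t - P t (y t))) := hN₁ _ _
    _ ≤ D * Real.exp (-b * (t - τ)) * N t (y t) := hdecay τ t (y t) ht.le
    _ = D * (Real.exp (-b * (t - τ)) * N t (y t)) := mul_assoc _ _ _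

end IsDichotomy

theorem integrableOn_evol_Ioc {X : Type*} [NormedAddCommGroup X] [NormedSpace ℝ X]
    {T : ℝ → ℝ → X →L[ℝ] X} {N : ℝ → X → ℝ} {K c : ℝ} (hN₁ : ∀ t u, ‖u‖ ≤ N t u)
    (hContB : ∀ τ (u : X), ContinuousOn (fun s => T τ s u) (Iic τ))
    (hBd : ∀ τ t (u : X), τ ≤ t → N t (T t τ u) ≤ K * Real.exp (c * (t - τ)) * N τ u)
    {y : ℝ → X} (hy : AEStronglyMeasurable y volume) {τ t : ℝ}
    (hNy : IntegrableOn (fun s => N s (y s)) (Ioc τ t)) :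
    IntegrableOn (fun s => T t s (y s)) (Ioc τ t) := by
  have hmeas : AEStronglyMeasurable (fun s => T t s (y s)) (volume.restrict (Ioc τ t)) :=
    aestronglyMeasurable_of_continuous_of_aestronglyMeasurable (fun s => (T t s).continuous)
      (fun u => ((hContB t u).mono Ioc_subset_Iic_self).aestronglyMeasurable measurableSet_Ioc)
      hy.restrict
  refine (hNy.const_mul (|K| * Real.exp (|c| * (t - τ)))).mono' hmeas
    ((ae_restrict_iff' measurableSet_Ioc).2 (ae_of_all _ fun s ⟨hτs, hst⟩ => ?_))
  have hexp : Real.exp (c * (t - s)) ≤ Real.exp (|c| * (t - τ)) := Real.exp_le_exp.2 <|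
    calc c * (t - s) ≤ |c| * (t - s) := mul_le_mul_of_nonneg_right (le_abs_self c) (by linarith)
      _ ≤ |c| * (t - τ) := by gcongr
  calc ‖T t s (y s)‖ ≤ N t (T t s (y s)) := hN₁ _ _
    _ ≤ K * Real.exp (c * (t - s)) * N s (y s) := hBd s t (y s) hst
    _ ≤ |K| * Real.exp (|c| * (t - τ)) * N s (y s) := by
      gcongr
      · exact (norm_nonneg _).trans (hN₁ _ _)
      · exact le_abs_self K

theorem unstable_part_of_bounded_solution_general
    {X : Type*} [NormedAddCommGroup X] [NormedSpace ℝ X] [CompleteSpace X]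
    (T : ℝ → ℝ → X →L[ℝ] X) (N : ℝ → X → ℝ) (C ε K c : ℝ)
    (hN₁ : ∀ t u, ‖u‖ ≤ N t u)
    (hN₂ : ∀ t (u : X), N t u ≤ C * Real.exp (ε * |t|) * ‖u‖)
    (hNadd : ∀ t (u v : X), N t (u + v) ≤ N t u + N t v)
    (hNmeas : ∀ u : X, Measurable fun t => N t u)
    (hCoc : ∀ τ s t, τ ≤ s → s ≤ t → ∀ u, T t s (T s τ u) = T t τ u)
    (hContB : ∀ τ (u : X), ContinuousOn (fun s => T τ s u) (Iic τ))
    (hBd : ∀ τ t (u : X), τ ≤ t → N t (T t τ u) ≤ K * Real.exp (c * (t - τ)) * N τ u)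
    (P : ℝ → X →L[ℝ] X) (S : ℝ → ℝ → X →L[ℝ] X) (a b D : ℝ)
    (hdich : IsDichotomy T N P S a b D)
    (q : ℝ≥0∞) (hq : 1 ≤ q)
    (y : ℝ → X) (hy : MemY2 N q y)
    (hmeas₂ : ∀ τ, AEStronglyMeasurable (fun t => S τ t (y t - P t (y t))) volume)
    (x : ℝ → X) (hxbdd : ∃ M, ∀ t, N t (x t) ≤ M)
    (hsol : SolvesEq T x y) :
    ∀ τ : ℝ, x τ - P τ (x τ) = -∫ t in Ioi τ, S τ t (y t - P t (y t)) := by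
  intro τ
  obtain ⟨M, hM⟩ := hxbdd
  have hN0 (t : ℝ) (u : X) : 0 ≤ N t u := (norm_nonneg u).trans (hN₁ t u)
  have hNcont (t : ℝ) : Continuous (N t) :=
    (LipschitzWith.of_subadditive_of_le_mul_norm (L := (C * Real.exp (ε * |t|)).toNNReal)
      (hNadd t) fun u => (hN₂ t u).trans (by gcongr; exact Real.le_coe_toNNReal _)).continuous
  have hNy : MemLp (fun t => N t (y t)) q volume :=
    hy.memLp_famNorm hN0 hNcont hNmeas (zero_lt_one.trans_le hq).ne'
  have hvoc : ∀ᶠ t in atTop, S τ t (x t - P t (x t))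
      = (x τ - P τ (x τ)) + ∫ s in Ioc τ t, S τ s (y s - P s (y s)) := by
    filter_upwards [eventually_ge_atTop τ] with t ht
    exact hdich.inv_unstable_eq_add_integral hCoc hsol ht <|
      integrableOn_evol_Ioc hN₁ hContB hBd hy.1 ((hNy.restrict _).integrable hq)
  have hlim : Tendsto (fun t => ∫ s in Ioc τ t, S τ s (y s - P s (y s))) atTop
      (𝓝 (∫ s in Ioi τ, S τ s (y s - P s (y s)))) := by
    refine (intervalIntegral_tendsto_integral_Ioi τ
      (hdich.integrableOn_inv_unstable_Ioi hN₁ hq hNy τ (hmeas₂ τ)) tendsto_id).congr' ?_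
    filter_upwards [eventually_ge_atTop τ] with t ht
    exact intervalIntegral.integral_of_le ht
  have hlim_sum := (tendsto_const_nhds.add hlim).congr' (hvoc.mono fun _ h => h.symm)
  exact eq_neg_of_add_eq_zero_left
    (tendsto_nhds_unique hlim_sum (hdich.tendsto_inv_unstable_atTop hN₁ hM τ))

/-- Under an exponential dichotomy, any bounded continuous solution `x`
of the integral equation with inhomogeneity `y ∈ L^q` satisfies
`Q τ (x τ) = -∫_τ^∞ T(τ,t)_| (Q t (y t)) dt` for every `τ`, where `Q t = I - P t`. -/
theorem unstable_part_of_bounded_solution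
    {X : Type*} [NormedAddCommGroup X] [NormedSpace ℝ X] [CompleteSpace X]
    (T : ℝ → ℝ → X →L[ℝ] X) (N : ℝ → X → ℝ) (C ε K c : ℝ)
    (hN₁ : ∀ t u, ‖u‖ ≤ N t u)
    (hN₂ : ∀ t (u : X), N t u ≤ C * Real.exp (ε * |t|) * ‖u‖)
    (hNadd : ∀ t (u v : X), N t (u + v) ≤ N t u + N t v)
    (hNsmul : ∀ t (r : ℝ) (u : X), N t (r • u) = |r| * N t u)
    (hNmeas : ∀ u : X, Measurable fun t => N t u)
    (hId : ∀ t, T t t = ContinuousLinearMap.id ℝ X)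
    (hCoc : ∀ τ s t, τ ≤ s → s ≤ t → ∀ u, T t s (T s τ u) = T t τ u)
    (hCont : ∀ τ (u : X), ContinuousOn (fun t => T t τ u) (Ici τ))
    (hContB : ∀ τ (u : X), ContinuousOn (fun s => T τ s u) (Iic τ))
    (hBd : ∀ τ t (u : X), τ ≤ t → N t (T t τ u) ≤ K * Real.exp (c * (t - τ)) * N τ u)
    (P : ℝ → X →L[ℝ] X) (S : ℝ → ℝ → X →L[ℝ] X) (a b D : ℝ)
    (hdich : IsDichotomy T N P S a b D)
    (q : ℝ≥0∞) (hq : 1 ≤ q)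
    (y : ℝ → X) (hy : MemY2 N q y)
    (hmeas₂ : ∀ τ, AEStronglyMeasurable (fun t => S τ t (y t - P t (y t))) volume)
    (x : ℝ → X) (hxcont : Continuous x) (hxbdd : ∃ M, ∀ t, N t (x t) ≤ M)
    (hsol : SolvesEq T x y) :
    ∀ τ : ℝ, x τ - P τ (x τ) = -∫ t in Ioi τ, S τ t (y t - P t (y t)) :=
  unstable_part_of_bounded_solution_general T N C ε K c hN₁ hN₂ hNadd hNmeas hCoc hContB hBd P S a b
    D hdich q hq y hy hmeas₂ x hxbdd hsol
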